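/- arXiv:2102.02837 — 2 statements merged into one kernel-verified Lean document; each statement's English description precedes it below -/
import Mathlib

section
/- Three-point inequality: for every x ∈ ℝ^d, writing x⁺ = S(x) and x̄ = prox_{λf}(x), one has (L − λ⁻¹ − β)‖x⁺ − x‖² ≤ (L − λ⁻¹ + β)‖x̄ − x‖² − (L + λ⁻¹ − β − 2μ)‖x̄ − x⁺‖². -/
/-!
Both subproblems are strongly convex: `model x + L/2 ‖· - x‖²` with modulus `L - μ`, minimized at
`x⁺`; and `x̄`, which minimizes `f + λ⁻¹/2 ‖· - x‖²`, also minimizes the upper model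
`model x̄ + β/2 ‖· - x̄‖² + λ⁻¹/2 ‖· - x‖²` (it majorizes the former and touches it at `x̄`), of
modulus `λ⁻¹ + β - μ`. Quadratic growth of each at its minimizer, evaluated at the other's minimizer,
gives two inequalities whose sum, after replacing `model x` and `model x̄` by `f` at the cost of
three model-error terms, is the claim.
-/

open Set Filter Topology

variable {E : Type*} [NormedAddCommGroup E]

lemma eq_of_abs_sub_le_sq_norm_sub {f g : E → ℝ} {β : ℝ} {z : E}
    (hclose : ∀ y, |f y - g y| ≤ β / 2 * ‖y - z‖ ^ 2) : g z = f z := by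
  simpa [sub_eq_zero, eq_comm] using hclose z

lemma IsMinOn.add_sq_norm_sub_of_abs_sub_le {f g : E → ℝ} {β s : ℝ} {x z : E}
    (hz : IsMinOn (fun y ↦ f y + s / 2 * ‖y - x‖ ^ 2) univ z)
    (hclose : ∀ y, |f y - g y| ≤ β / 2 * ‖y - z‖ ^ 2) :
    IsMinOn (fun y ↦ g y + β / 2 * ‖y - z‖ ^ 2 + s / 2 * ‖y - x‖ ^ 2) univ z := by
  refine isMinOn_univ_iff.2 fun y ↦ ?_
  have hgz := eq_of_abs_sub_le_sq_norm_sub hclose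
  have hzy := isMinOn_univ_iff.1 hz y
  have hfy := (abs_le.1 (hclose y)).2
  simp only [hgz, sub_self, norm_zero]
  linarith

section StrongConvexity

variable [InnerProductSpace ℝ E] {s : Set E} {g : E → ℝ}

lemma strongConvexOn_neg_iff_convexOn_add_sq_norm {μ : ℝ} :
    StrongConvexOn s (-μ) g ↔ ConvexOn ℝ s fun y ↦ g y + μ / 2 * ‖y‖ ^ 2 := by
  simp only [strongConvexOn_iff_convex, neg_div, neg_mul, sub_neg_eq_add]

lemma StrongConvexOn.add_sq_norm_sub {m : ℝ} (hg : StrongConvexOn s m g) (c : ℝ) (a : E) :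
    StrongConvexOn s (m + c) fun y ↦ g y + c / 2 * ‖y - a‖ ^ 2 := by
  rw [strongConvexOn_iff_convex] at hg ⊢
  refine ((hg.add ((innerₛₗ ℝ (-c • a)).convexOn hg.1)).add_const (c / 2 * ‖a‖ ^ 2)).congr
    fun y _ ↦ ?_
  simp only [Pi.add_apply, innerₛₗ_apply_apply, real_inner_smul_left, norm_sub_sq_real,
    real_inner_comm a y]
  ring

/-- Divide the strong convexity inequality on the segment `[x, y]` by `t` and let `t → 0⁺`. -/
lemma StrongConvexOn.add_sq_norm_sub_le_of_isMinOn {m : ℝ} (hg : StrongConvexOn s m g) {x y : E}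
    (hx : x ∈ s) (hy : y ∈ s) (hmin : IsMinOn g s x) :
    g x + m / 2 * ‖y - x‖ ^ 2 ≤ g y := by
  set C := m / 2 * ‖y - x‖ ^ 2
  have hsegment : ∀ t ∈ Ioo (0 : ℝ) 1, g x + (1 - t) * C ≤ g y := by
    rintro t ⟨ht0, ht1⟩
    have hconv := hg.2 hx hy (sub_nonneg.2 ht1.le) ht0.le (sub_add_cancel 1 t)
    have hle : g x ≤ g ((1 - t) • x + t • y) :=
      hmin (hg.1 hx hy (sub_nonneg.2 ht1.le) ht0.le (sub_add_cancel 1 t))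
    simp only [smul_eq_mul, norm_sub_rev x y] at hconv
    have : t * (g x + (1 - t) * C) ≤ t * g y := by linear_combination hle + hconv
    exact le_of_mul_le_mul_left this ht0
  have hlim : Tendsto (fun t : ℝ ↦ g x + (1 - t) * C) (𝓝[>] 0) (𝓝 (g x + (1 - 0) * C)) :=
    ((continuous_const.add ((continuous_const.sub continuous_id).mul continuous_const)).tendsto
      0).mono_left nhdsWithin_le_nhds
  simpa using le_of_tendsto hlim (eventually_of_mem (Ioo_mem_nhdsGT one_pos) hsegment)

end StrongConvexity

theorem three_point_inequality_general
    {d : ℕ}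
    (f : EuclideanSpace ℝ (Fin d) → ℝ)
    (model : EuclideanSpace ℝ (Fin d) → EuclideanSpace ℝ (Fin d) → ℝ)
    (β μ L lam : ℝ)
    (hmodel_wc : ∀ x, ConvexOn ℝ Set.univ (fun y => model x y + μ / 2 * ‖y‖ ^ 2))
    (hmodel_close : ∀ x y : EuclideanSpace ℝ (Fin d),
      |f y - model x y| ≤ β / 2 * ‖y - x‖ ^ 2)
    (prox : EuclideanSpace ℝ (Fin d) → EuclideanSpace ℝ (Fin d))
    (hprox : ∀ x y : EuclideanSpace ℝ (Fin d),
      f (prox x) + 1 / (2 * lam) * ‖prox x - x‖ ^ 2 ≤ f y + 1 / (2 * lam) * ‖y - x‖ ^ 2)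
    (S : EuclideanSpace ℝ (Fin d) → EuclideanSpace ℝ (Fin d))
    (hS : ∀ x y : EuclideanSpace ℝ (Fin d),
      model x (S x) + L / 2 * ‖S x - x‖ ^ 2 ≤ model x y + L / 2 * ‖y - x‖ ^ 2) :
    ∀ x : EuclideanSpace ℝ (Fin d),
      (L - lam⁻¹ - β) * ‖S x - x‖ ^ 2 ≤
        (L - lam⁻¹ + β) * ‖prox x - x‖ ^ 2 -
          (L + lam⁻¹ - β - 2 * μ) * ‖prox x - S x‖ ^ 2 := by
  intro x
  have hwc : ∀ z, StrongConvexOn univ (-μ) (model z) :=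
    fun z ↦ strongConvexOn_neg_iff_convexOn_add_sq_norm.2 (hmodel_wc z)
  have hS_min : IsMinOn (fun y ↦ model x y + L / 2 * ‖y - x‖ ^ 2) univ (S x) :=
    isMinOn_univ_iff.2 (hS x)
  have hprox_min : IsMinOn (fun y ↦ f y + lam⁻¹ / 2 * ‖y - x‖ ^ 2) univ (prox x) := by
    have hlam_half : 1 / (2 * lam) = lam⁻¹ / 2 := by ring
    simpa only [isMinOn_univ_iff, hlam_half] using hprox x
  have hS_growth := ((hwc x).add_sq_norm_sub L x).add_sq_norm_sub_le_of_isMinOn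
    (mem_univ _) (mem_univ (prox x)) hS_min
  have hprox_growth := (((hwc (prox x)).add_sq_norm_sub β (prox x)).add_sq_norm_sub lam⁻¹ x
    ).add_sq_norm_sub_le_of_isMinOn (mem_univ _) (mem_univ (S x))
    (hprox_min.add_sq_norm_sub_of_abs_sub_le (hmodel_close (prox x)))
  have hself := eq_of_abs_sub_le_sq_norm_sub (hmodel_close (prox x))
  have h₁ := (abs_le.1 (hmodel_close x (prox x))).1
  have h₂ := (abs_le.1 (hmodel_close x (S x))).2
  have h₃ := (abs_le.1 (hmodel_close (prox x) (S x))).1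
  simp only [hself, sub_self, norm_zero] at hprox_growth
  rw [norm_sub_rev (prox x) (S x)] at hS_growth ⊢
  linear_combination 2 * (hS_growth + hprox_growth + h₁ + h₂ + h₃)

/-- Three-point inequality: for every `x`, writing `x⁺ = S(x)` and
`x̄ = prox_{λf}(x)`, one has
`(L − λ⁻¹ − β)‖x⁺ − x‖² ≤ (L − λ⁻¹ + β)‖x̄ − x‖² − (L + λ⁻¹ − β − 2μ)‖x̄ − x⁺‖²`. -/
theorem three_point_inequality
    {d : ℕ} (hd : 1 ≤ d)
    (f : EuclideanSpace ℝ (Fin d) → ℝ)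
    (model : EuclideanSpace ℝ (Fin d) → EuclideanSpace ℝ (Fin d) → ℝ)
    (β μ L lam : ℝ)
    (hβ : 0 < β) (hμ : 0 ≤ μ)
    (hlsc : LowerSemicontinuous f)
    (hmodel_lsc : ∀ x, LowerSemicontinuous (model x))
    (hmodel_wc : ∀ x, ConvexOn ℝ Set.univ (fun y => model x y + μ / 2 * ‖y‖ ^ 2))
    (hmodel_close : ∀ x y : EuclideanSpace ℝ (Fin d),
      |f y - model x y| ≤ β / 2 * ‖y - x‖ ^ 2)
    (hL : L > 7 / 2 * β + 3 * μ)
    (hlam : lam = (L / 2 + (β + 2 * μ) / 4)⁻¹)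
    (prox : EuclideanSpace ℝ (Fin d) → EuclideanSpace ℝ (Fin d))
    (hprox : ∀ x y : EuclideanSpace ℝ (Fin d),
      f (prox x) + 1 / (2 * lam) * ‖prox x - x‖ ^ 2 ≤ f y + 1 / (2 * lam) * ‖y - x‖ ^ 2)
    (S : EuclideanSpace ℝ (Fin d) → EuclideanSpace ℝ (Fin d))
    (hS : ∀ x y : EuclideanSpace ℝ (Fin d),
      model x (S x) + L / 2 * ‖S x - x‖ ^ 2 ≤ model x y + L / 2 * ‖y - x‖ ^ 2)
    (flam : EuclideanSpace ℝ (Fin d) → ℝ)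
    (hflam : ∀ x, flam x = f (prox x) + 1 / (2 * lam) * ‖prox x - x‖ ^ 2) :
    ∀ x : EuclideanSpace ℝ (Fin d),
      (L - lam⁻¹ - β) * ‖S x - x‖ ^ 2 ≤
        (L - lam⁻¹ + β) * ‖prox x - x‖ ^ 2 -
          (L + lam⁻¹ - β - 2 * μ) * ‖prox x - S x‖ ^ 2 :=
  three_point_inequality_general f model β μ L lam hmodel_wc hmodel_close prox hprox S hS
end

section
/- Improve or localize: let x_0, x_1, …, x_t be generated by the proximal updates x_{τ+1} = S(x_τ). Then for every 0 ≤ τ ≤ t, ‖x_τ − x_0‖ ≤ sqrt( (θ₁/θ₂) · 2 η t · ( f_λ(x_0) − f_λ(x_t) ) ), where η = 1/L, θ₁ = (L − λ⁻¹ + β)λ²L²/(L − λ⁻¹ − β) and θ₂ = (L − λ⁻¹ − β)λL/(L + λ⁻¹ − β − 2μ). -/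
/-!
A proximal step decreases the Moreau envelope by `K‖S x - x‖²`, `K = (L - β) / (2λ(L + β))`:
`f_λ (S x)` is bounded once by the prox objective at `prox x`, and once, through the model, by
the `(L - μ)`-strong convexity of the proximal subproblem; a convex combination of the two bounds
cancels the `‖prox x - x‖²` terms. Telescoping and Cauchy–Schwarz give
`K‖x_τ - x_0‖² ≤ t (f_λ x_0 - f_λ x_t)`, and for the given `λ` one has `K⁻¹ ≤ (θ₁/θ₂)·2η`.
-/

open Filter Topology Set Finset

section ProximalStep

variable {E : Type*} [NormedAddCommGroup E] [InnerProductSpace ℝ E]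

theorem strongConvexOn_add_sq_norm_sub {g : E → ℝ} {μ : ℝ}
    (hg : ConvexOn ℝ univ fun y ↦ g y + μ / 2 * ‖y‖ ^ 2) (L : ℝ) (x : E) :
    StrongConvexOn univ (L - μ) fun y ↦ g y + L / 2 * ‖y - x‖ ^ 2 := by
  rw [strongConvexOn_iff_convex]
  have h_affine : ConvexOn ℝ univ fun y ↦ (-L • innerₛₗ ℝ x) y + L / 2 * ‖x‖ ^ 2 :=
    ((-L • innerₛₗ ℝ x).convexOn convex_univ).add_const _
  refine (hg.add h_affine).congr fun y _ ↦ ?_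
  simp only [Pi.add_apply, LinearMap.smul_apply, innerₛₗ_apply_apply, smul_eq_mul,
    norm_sub_sq_real, real_inner_comm x y]
  ring

theorem StrongConvexOn.add_sq_le_of_forall_le {h : E → ℝ} {m : ℝ}
    (hh : StrongConvexOn univ m h) {p : E} (hp : ∀ y, h p ≤ h y) (y : E) :
    h p + m / 2 * ‖y - p‖ ^ 2 ≤ h y := by
  have h_pos : ∀ t ∈ Ioc (0 : ℝ) 1, h p + (1 - t) * (m / 2 * ‖y - p‖ ^ 2) ≤ h y := by
    rintro t ⟨ht0, ht1⟩
    have h_conv := hh.2 (mem_univ y) (mem_univ p) ht0.le (sub_nonneg.2 ht1) (add_sub_cancel t 1)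
    have h_min := hp (t • y + (1 - t) • p)
    simp only [smul_eq_mul] at h_conv
    nlinarith
  have h_lim : Tendsto (fun t : ℝ ↦ h p + (1 - t) * (m / 2 * ‖y - p‖ ^ 2)) (𝓝[>] 0)
      (𝓝 (h p + m / 2 * ‖y - p‖ ^ 2)) := by
    have : Continuous fun t : ℝ ↦ h p + (1 - t) * (m / 2 * ‖y - p‖ ^ 2) := by fun_prop
    simpa using (this.tendsto 0).mono_left nhdsWithin_le_nhds
  exact le_of_tendsto h_lim (mem_of_superset (Ioc_mem_nhdsGT one_pos) h_pos)

theorem moreau_envelope_sufficient_decrease {f : E → ℝ} {model : E → E → ℝ} {β μ L lam : ℝ}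
    (hmodel_wc : ∀ x, ConvexOn ℝ univ fun y ↦ model x y + μ / 2 * ‖y‖ ^ 2)
    (hmodel_close : ∀ x y, |f y - model x y| ≤ β / 2 * ‖y - x‖ ^ 2)
    (hlam : 0 < lam) (hlam_lo : β + μ ≤ lam⁻¹) (hlam_hi : lam⁻¹ ≤ L + β)
    {prox : E → E}
    (hprox : ∀ x y, f (prox x) + 1 / (2 * lam) * ‖prox x - x‖ ^ 2
      ≤ f y + 1 / (2 * lam) * ‖y - x‖ ^ 2)
    {S : E → E}
    (hS : ∀ x y, model x (S x) + L / 2 * ‖S x - x‖ ^ 2 ≤ model x y + L / 2 * ‖y - x‖ ^ 2)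
    {flam : E → ℝ} (hflam : ∀ x, flam x = f (prox x) + 1 / (2 * lam) * ‖prox x - x‖ ^ 2)
    (x : E) :
    flam (S x) + (L - β) / (2 * lam * (L + β)) * ‖S x - x‖ ^ 2 ≤ flam x := by
  set c := 1 / (2 * lam) with hc
  have hc_inv : c = lam⁻¹ / 2 := by rw [hc]; ring
  have h_env_prox : flam (S x) ≤ f (prox x) + c * ‖prox x - S x‖ ^ 2 := hflam _ ▸ hprox _ _
  have h_env_le : flam (S x) ≤ f (S x) := by simpa [hflam] using hprox (S x) (S x)
  have h_upper : f (S x) ≤ model x (S x) + β / 2 * ‖S x - x‖ ^ 2 :=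
    sub_le_iff_le_add'.1 (abs_le.1 (hmodel_close x (S x))).2
  have h_lower : model x (prox x) ≤ f (prox x) + β / 2 * ‖prox x - x‖ ^ 2 := by
    linarith [(abs_le.1 (hmodel_close x (prox x))).1]
  have h_growth := (strongConvexOn_add_sq_norm_sub (hmodel_wc x) L x).add_sq_le_of_forall_le
    (hS x) (prox x)
  have h_model_step : flam (S x) ≤ f (prox x) + (L + β) / 2 * ‖prox x - x‖ ^ 2
      - (L - β) / 2 * ‖S x - x‖ ^ 2 - (L - μ) / 2 * ‖prox x - S x‖ ^ 2 := by
    linarith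
  have hc_lo : (β + μ) / 2 ≤ c := by linarith
  have hc_hi : c ≤ (L + β) / 2 := by linarith
  have hc_pos : 0 < c := by positivity
  have hLβ : 0 < L + β := by linarith
  have h_comb : (L + β) / 2 * (flam (S x) + (L - β) / (2 * lam * (L + β)) * ‖S x - x‖ ^ 2)
      ≤ (L + β) / 2 * flam x := by
    have h_const : (L + β) / 2 * ((L - β) / (2 * lam * (L + β))) = c * (L - β) / 2 := by
      rw [hc]; field_simp
    rw [mul_add, ← mul_assoc, h_const, hflam x]
    -- weights `(L + β) / 2 - c` and `c` cancel `‖prox x - x‖²`; `c ≥ (β + μ) / 2` absorbs the rest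
    linarith [mul_le_mul_of_nonneg_left h_env_prox (sub_nonneg.2 hc_hi),
      mul_le_mul_of_nonneg_left h_model_step hc_pos.le,
      mul_nonneg hc_pos.le (mul_nonneg (sub_nonneg.2 hc_lo) (sq_nonneg ‖prox x - S x‖))]
  exact le_of_mul_le_mul_left h_comb (by positivity)

end ProximalStep

section Telescoping

variable {α : Type*} [PseudoMetricSpace α] {x : ℕ → α}

theorem sq_dist_le_mul_sum_sq_dist (n : ℕ) :
    dist (x n) (x 0) ^ 2 ≤ n * ∑ i ∈ range n, dist (x (i + 1)) (x i) ^ 2 := by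
  have h_triangle := dist_le_range_sum_dist x n
  simp only [dist_comm (x 0), dist_comm (x _) (x (_ + 1))] at h_triangle
  calc dist (x n) (x 0) ^ 2 ≤ (∑ i ∈ range n, dist (x (i + 1)) (x i)) ^ 2 := by gcongr
    _ ≤ n * ∑ i ∈ range n, dist (x (i + 1)) (x i) ^ 2 := by
      simpa using sq_sum_le_card_mul_sum_sq (s := range n)

variable {v : ℕ → ℝ} {K : ℝ}

theorem mul_sum_sq_dist_le_of_decrease
    (hdec : ∀ i, v (i + 1) + K * dist (x (i + 1)) (x i) ^ 2 ≤ v i) (n : ℕ) :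
    K * ∑ i ∈ range n, dist (x (i + 1)) (x i) ^ 2 ≤ v 0 - v n := by
  rw [mul_sum, ← sum_range_sub' v]
  exact sum_le_sum fun i _ ↦ by linarith [hdec i]

theorem mul_sq_dist_le_of_decrease (hK : 0 ≤ K)
    (hdec : ∀ i, v (i + 1) + K * dist (x (i + 1)) (x i) ^ 2 ≤ v i) {τ t : ℕ} (hτ : τ ≤ t) :
    K * dist (x τ) (x 0) ^ 2 ≤ t * (v 0 - v t) := by
  have h_sum_mono : ∑ i ∈ range τ, dist (x (i + 1)) (x i) ^ 2
      ≤ ∑ i ∈ range t, dist (x (i + 1)) (x i) ^ 2 :=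
    sum_le_sum_of_subset_of_nonneg (range_subset_range.2 hτ) fun _ _ _ ↦ sq_nonneg _
  calc K * dist (x τ) (x 0) ^ 2
        ≤ K * (τ * ∑ i ∈ range τ, dist (x (i + 1)) (x i) ^ 2) := by
        gcongr; exact sq_dist_le_mul_sum_sq_dist τ
    _ ≤ t * (K * ∑ i ∈ range t, dist (x (i + 1)) (x i) ^ 2) := by
        rw [mul_left_comm]; gcongr
    _ ≤ t * (v 0 - v t) := by gcongr; exact mul_sum_sq_dist_le_of_decrease hdec t

end Telescoping

theorem add_mul_sq_le_of_two_mul_add_le {β μ L M : ℝ} (hβ : 0 ≤ β) (hμ : 0 ≤ μ)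
    (hM : 2 * β + 2 * μ ≤ M) (hgap : 0 < L - M - β) :
    (L + β) * (L - M - β) ^ 2 ≤ (L - β) * (L - M + β) * (L + M - β - 2 * μ) := by
  calc (L + β) * (L - M - β) ^ 2 = (L - M - β) * (L - M - β) * (L + β) := by ring
    _ ≤ (L - β) * (L - M + β) * (L + M - β - 2 * μ) := by
      gcongr ?_ * ?_ * ?_ <;> nlinarith

theorem inv_le_theta_ratio_mul {β μ L lam : ℝ} (hβ : 0 ≤ β) (hμ : 0 ≤ μ)
    (hL : L > 7 / 2 * β + 3 * μ) (hlam : lam = (L / 2 + (β + 2 * μ) / 4)⁻¹) :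
    ((L - β) / (2 * lam * (L + β)))⁻¹ ≤
      ((L - lam⁻¹ + β) * lam ^ 2 * L ^ 2 / (L - lam⁻¹ - β)) /
        ((L - lam⁻¹ - β) * lam * L / (L + lam⁻¹ - β - 2 * μ)) * (2 * (1 / L)) := by
  obtain ⟨M, hM, rfl⟩ : ∃ M, M = L / 2 + (β + 2 * μ) / 4 ∧ lam = M⁻¹ := ⟨_, rfl, hlam⟩
  have hgap : 0 < L - M - β := by linarith
  have hM0 : 0 < M := by linarith
  have hL0 : 0 < L := by linarith
  have hLβ : 0 < L - β := by linarith
  -- with `M = λ⁻¹`, the assumption `L > 7β/2 + 3μ` is exactly `M > 2β + 2μ`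
  have key := add_mul_sq_le_of_two_mul_add_le hβ hμ (by linarith) hgap
  rw [inv_inv]
  field_simp
  exact key

theorem improve_or_localize_general
    {d : ℕ}
    (f : EuclideanSpace ℝ (Fin d) → ℝ)
    (model : EuclideanSpace ℝ (Fin d) → EuclideanSpace ℝ (Fin d) → ℝ)
    (β μ L lam : ℝ)
    (hβ : 0 < β) (hμ : 0 ≤ μ)
    (hmodel_wc : ∀ x, ConvexOn ℝ Set.univ (fun y => model x y + μ / 2 * ‖y‖ ^ 2))
    (hmodel_close : ∀ x y : EuclideanSpace ℝ (Fin d),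
      |f y - model x y| ≤ β / 2 * ‖y - x‖ ^ 2)
    (hL : L > 7 / 2 * β + 3 * μ)
    (hlam : lam = (L / 2 + (β + 2 * μ) / 4)⁻¹)
    (prox : EuclideanSpace ℝ (Fin d) → EuclideanSpace ℝ (Fin d))
    (hprox : ∀ x y : EuclideanSpace ℝ (Fin d),
      f (prox x) + 1 / (2 * lam) * ‖prox x - x‖ ^ 2 ≤ f y + 1 / (2 * lam) * ‖y - x‖ ^ 2)
    (S : EuclideanSpace ℝ (Fin d) → EuclideanSpace ℝ (Fin d))
    (hS : ∀ x y : EuclideanSpace ℝ (Fin d),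
      model x (S x) + L / 2 * ‖S x - x‖ ^ 2 ≤ model x y + L / 2 * ‖y - x‖ ^ 2)
    (flam : EuclideanSpace ℝ (Fin d) → ℝ)
    (hflam : ∀ x, flam x = f (prox x) + 1 / (2 * lam) * ‖prox x - x‖ ^ 2) :
    ∀ (xs : ℕ → EuclideanSpace ℝ (Fin d)) (t : ℕ),
      (∀ τ : ℕ, xs (τ + 1) = S (xs τ)) →
      ∀ τ : ℕ, τ ≤ t →
        ‖xs τ - xs 0‖ ≤
          Real.sqrt
            ((((L - lam⁻¹ + β) * lam ^ 2 * L ^ 2 / (L - lam⁻¹ - β)) /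
                ((L - lam⁻¹ - β) * lam * L / (L + lam⁻¹ - β - 2 * μ))) *
              (2 * (1 / L) * t) * (flam (xs 0) - flam (xs t))) := by
  intro xs t hstep τ hτ
  have hlam_inv : lam⁻¹ = L / 2 + (β + 2 * μ) / 4 := by rw [hlam, inv_inv]
  have hlam_pos : 0 < lam := by rw [hlam]; exact inv_pos.2 (by linarith)
  set K := (L - β) / (2 * lam * (L + β))
  have hK : 0 < K := div_pos (by linarith) (mul_pos (mul_pos two_pos hlam_pos) (by linarith))
  have hdec (s : ℕ) : flam (xs (s + 1)) + K * dist (xs (s + 1)) (xs s) ^ 2 ≤ flam (xs s) := by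
    rw [hstep s, dist_eq_norm]
    exact moreau_envelope_sufficient_decrease hmodel_wc hmodel_close hlam_pos (by linarith)
      (by linarith) hprox hS hflam (xs s)
  have hloc := mul_sq_dist_le_of_decrease (v := fun s ↦ flam (xs s)) hK.le hdec hτ
  rw [dist_eq_norm] at hloc
  set θ := ((L - lam⁻¹ + β) * lam ^ 2 * L ^ 2 / (L - lam⁻¹ - β)) /
    ((L - lam⁻¹ - β) * lam * L / (L + lam⁻¹ - β - 2 * μ))
  set D := flam (xs 0) - flam (xs t)
  refine Real.le_sqrt_of_sq_le ?_
  calc ‖xs τ - xs 0‖ ^ 2 ≤ K⁻¹ * (t * D) := (le_inv_mul_iff₀ hK).2 hloc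
    _ ≤ θ * (2 * (1 / L)) * (t * D) := by
      gcongr
      · exact (mul_nonneg hK.le (sq_nonneg _)).trans hloc
      · exact inv_le_theta_ratio_mul hβ.le hμ hL hlam
    _ = θ * (2 * (1 / L) * t) * D := by ring

/-- Improve or localize: if `x_{τ+1} = S(x_τ)`, then for every `0 ≤ τ ≤ t`,
`‖x_τ − x_0‖ ≤ sqrt((θ₁/θ₂)·2ηt·(f_λ(x_0) − f_λ(x_t)))`, where `η = 1/L`,
`θ₁ = (L − λ⁻¹ + β)λ²L²/(L − λ⁻¹ − β)` and `θ₂ = (L − λ⁻¹ − β)λL/(L + λ⁻¹ − β − 2μ)`. -/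
theorem improve_or_localize
    {d : ℕ} (hd : 1 ≤ d)
    (f : EuclideanSpace ℝ (Fin d) → ℝ)
    (model : EuclideanSpace ℝ (Fin d) → EuclideanSpace ℝ (Fin d) → ℝ)
    (β μ L lam : ℝ)
    (hβ : 0 < β) (hμ : 0 ≤ μ)
    (hlsc : LowerSemicontinuous f)
    (hmodel_lsc : ∀ x, LowerSemicontinuous (model x))
    (hmodel_wc : ∀ x, ConvexOn ℝ Set.univ (fun y => model x y + μ / 2 * ‖y‖ ^ 2))
    (hmodel_close : ∀ x y : EuclideanSpace ℝ (Fin d),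
      |f y - model x y| ≤ β / 2 * ‖y - x‖ ^ 2)
    (hL : L > 7 / 2 * β + 3 * μ)
    (hlam : lam = (L / 2 + (β + 2 * μ) / 4)⁻¹)
    (prox : EuclideanSpace ℝ (Fin d) → EuclideanSpace ℝ (Fin d))
    (hprox : ∀ x y : EuclideanSpace ℝ (Fin d),
      f (prox x) + 1 / (2 * lam) * ‖prox x - x‖ ^ 2 ≤ f y + 1 / (2 * lam) * ‖y - x‖ ^ 2)
    (S : EuclideanSpace ℝ (Fin d) → EuclideanSpace ℝ (Fin d))
    (hS : ∀ x y : EuclideanSpace ℝ (Fin d),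
      model x (S x) + L / 2 * ‖S x - x‖ ^ 2 ≤ model x y + L / 2 * ‖y - x‖ ^ 2)
    (flam : EuclideanSpace ℝ (Fin d) → ℝ)
    (hflam : ∀ x, flam x = f (prox x) + 1 / (2 * lam) * ‖prox x - x‖ ^ 2) :
    ∀ (xs : ℕ → EuclideanSpace ℝ (Fin d)) (t : ℕ),
      (∀ τ : ℕ, xs (τ + 1) = S (xs τ)) →
      ∀ τ : ℕ, τ ≤ t →
        ‖xs τ - xs 0‖ ≤
          Real.sqrt
            ((((L - lam⁻¹ + β) * lam ^ 2 * L ^ 2 / (L - lam⁻¹ - β)) /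
                ((L - lam⁻¹ - β) * lam * L / (L + lam⁻¹ - β - 2 * μ))) *
              (2 * (1 / L) * t) * (flam (xs 0) - flam (xs t))) :=
  improve_or_localize_general f model β μ L lam hβ hμ hmodel_wc hmodel_close hL hlam prox hprox S hS
    flam hflam
end
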